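/- Any bounded above (or bounded below) contractible cochain complex over a weakly idempotent complete additive category splits. -/

import Mathlib

open CategoryTheory CategoryTheory.Limits

universe v u

variable (B : Type u) [Category.{v} B] [Preadditive B] [HasBinaryBiproducts B]

/-- An additive category is weakly idempotent complete if every split monomorphism
gives a direct sum decomposition. -/
def WeaklyIdempotentComplete : Prop :=
  ∀ ⦃X Y : B⦄ (i : X ⟶ Y) (p : Y ⟶ X), i ≫ p = 𝟙 X →
    ∃ (Z : B) (e : Y ≅ X ⊞ Z), i ≫ e.hom = biprod.inl

/-- The split complex `⊕ᵢ id_{N^{i+1}}[-i]`, with degree `i` term `N i ⊞ N (i + 1)`. -/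
noncomputable def splitComplex (N : ℤ → B) : CochainComplex B ℤ :=
  CochainComplex.of (fun i => N i ⊞ N (i + 1))
    (fun _ => biprod.snd ≫ biprod.inl)
    (fun _ => by simp)

/-
For a contracting homotopy `h` of `M` we have `d h + h d = 1` and `d h d = d`, so `d h` and `h d`
are complementary idempotents on each `M^i`. Over a weakly idempotent complete category an
idempotent splits iff its complement does, and if `f g` and `g f` are both idempotent then one
splits iff the other does. Taking `f = d^i`, `g = h^(i+1)`: `d h` splits on `M^i` iff `h d` does
iff `d h` splits on `M^(i+1)`. It splits trivially wherever `M` vanishes, hence in every degree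
when `M` is bounded above or below. If `Z^i` is its image (the cycles of `M^i`), then
`M^i ≅ Z^i ⊞ Z^(i+1)` via `d^i` on the second summand, compatibly with the differentials.
-/

section SplitIdempotent

variable {C : Type u} [Category.{v} C]

def IsSplitIdempotent {X : C} (e : X ⟶ X) : Prop :=
  ∃ (Z : C) (ι : Z ⟶ X) (π : X ⟶ Z), ι ≫ π = 𝟙 Z ∧ π ≫ ι = e

namespace IsSplitIdempotent

lemma of_isZero {X : C} (hX : IsZero X) (e : X ⟶ X) : IsSplitIdempotent e :=
  ⟨X, 𝟙 X, 𝟙 X, Category.id_comp _, hX.eq_of_src _ _⟩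

lemma comp_swap {X Y : C} {f : X ⟶ Y} {g : Y ⟶ X} (hfg : IsSplitIdempotent (f ≫ g))
    (hgf : (g ≫ f) ≫ (g ≫ f) = g ≫ f) : IsSplitIdempotent (g ≫ f) := by
  obtain ⟨Z, ι, π, hιπ, hπι⟩ := hfg
  refine ⟨Z, ι ≫ f, g ≫ π, ?_, ?_⟩
  · calc (ι ≫ f) ≫ g ≫ π = ι ≫ (π ≫ ι) ≫ π := by simp only [hπι, Category.assoc]
      _ = 𝟙 Z := by simp only [Category.assoc, reassoc_of% hιπ, hιπ]
  · calc (g ≫ π) ≫ ι ≫ f = (g ≫ f) ≫ (g ≫ f) := by simp only [Category.assoc, reassoc_of% hπι]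
      _ = g ≫ f := hgf

variable [Preadditive C] [HasBinaryBiproducts C]

lemma id_sub (hC : WeaklyIdempotentComplete C) {X : C} {e : X ⟶ X}
    (he : IsSplitIdempotent e) : IsSplitIdempotent (𝟙 X - e) := by
  obtain ⟨Y, s, r, hsr, rfl⟩ := he
  obtain ⟨Z, φ, hφ⟩ := hC s r hsr
  set p := 𝟙 X - r ≫ s
  have hs : biprod.inl ≫ φ.inv = s := by rw [← hφ, Category.assoc, φ.hom_inv_id, Category.comp_id]
  have hsp : s ≫ p = 0 := by
    rw [Preadditive.comp_sub, Category.comp_id, reassoc_of% hsr, sub_self]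
  have hpp : p ≫ p = p := by
    rw [Preadditive.sub_comp, Category.id_comp, Category.assoc, hsp, comp_zero, sub_zero]
  -- the complement is cut out of the summand `Z` of `X ≅ Y ⊞ Z` by `p`
  refine ⟨Z, biprod.inr ≫ φ.inv ≫ p, p ≫ φ.hom ≫ biprod.snd, ?_, ?_⟩
  · have hs_snd : s ≫ φ.hom ≫ biprod.snd = 0 := by rw [reassoc_of% hφ, biprod.inl_snd]
    simp only [Category.assoc, p, Preadditive.sub_comp, Category.id_comp, hs_snd, comp_zero,
      sub_zero, φ.inv_hom_id_assoc, biprod.inr_snd]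
  · calc (p ≫ φ.hom ≫ biprod.snd) ≫ biprod.inr ≫ φ.inv ≫ p
        = p ≫ φ.hom ≫ (biprod.snd ≫ biprod.inr) ≫ φ.inv ≫ p := by simp only [Category.assoc]
      _ = p ≫ p - p ≫ φ.hom ≫ biprod.fst ≫ (biprod.inl ≫ φ.inv) ≫ p := by
        have htotal : (biprod.snd : Y ⊞ Z ⟶ Z) ≫ biprod.inr = 𝟙 _ - biprod.fst ≫ biprod.inl := by
          rw [← biprod.total, add_sub_cancel_left]
        simp only [htotal, Preadditive.sub_comp, Preadditive.comp_sub, Category.id_comp,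
          Category.assoc, φ.hom_inv_id_assoc]
      _ = p := by rw [hs, hsp, hpp]; simp only [comp_zero, sub_zero]

lemma id_sub_iff (hC : WeaklyIdempotentComplete C) {X : C} {e : X ⟶ X} :
    IsSplitIdempotent (𝟙 X - e) ↔ IsSplitIdempotent e :=
  ⟨fun he => by simpa using he.id_sub hC, id_sub hC⟩

end IsSplitIdempotent

end SplitIdempotent

namespace Homotopy

variable {C : Type u} [Category.{v} C] [Preadditive C] {ι : Type*} {c : ComplexShape ι}
  {M : HomologicalComplex C c} (h : Homotopy (𝟙 M) 0)

lemma dNext_add_prevD (i : ι) : dNext i h.hom + prevD i h.hom = 𝟙 (M.X i) := by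
  simpa only [HomologicalComplex.id_f, HomologicalComplex.zero_f_apply, add_zero]
    using (h.comm i).symm

lemma d_comp_hom_comp_d (i j : ι) : M.d i j ≫ h.hom j i ≫ M.d i j = M.d i j := by
  by_cases hij : c.Rel i j
  · have hd : M.d i j ≫ dNext j h.hom = 0 := by
      simp only [dNext, AddMonoidHom.mk'_apply, M.d_comp_d_assoc, zero_comp]
    calc M.d i j ≫ h.hom j i ≫ M.d i j = M.d i j ≫ (dNext j h.hom + prevD j h.hom) := by
          rw [Preadditive.comp_add, hd, zero_add, prevD_eq _ hij]
      _ = M.d i j := by rw [h.dNext_add_prevD, Category.comp_id]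
  · rw [M.shape i j hij, zero_comp]

lemma d_comp_prevD {i j : ι} (hij : c.Rel i j) : M.d i j ≫ prevD j h.hom = M.d i j := by
  rw [prevD_eq _ hij, h.d_comp_hom_comp_d]

lemma prevD_comp_d (i j : ι) : prevD i h.hom ≫ M.d i j = 0 := by
  simp only [prevD, AddMonoidHom.mk'_apply, Category.assoc, M.d_comp_d, comp_zero]

lemma dNext_comp_prevD (i : ι) : dNext i h.hom ≫ prevD i h.hom = 0 := by
  have hidem : dNext i h.hom ≫ dNext i h.hom = dNext i h.hom := by
    simp only [dNext, AddMonoidHom.mk'_apply, Category.assoc, reassoc_of% (h.d_comp_hom_comp_d)]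
  rw [eq_sub_of_add_eq' (h.dNext_add_prevD i), Preadditive.comp_sub, Category.comp_id, hidem,
    sub_self]

lemma isSplitIdempotent_prevD_iff [HasBinaryBiproducts C] (hC : WeaklyIdempotentComplete C)
    {i j : ι} (hij : c.Rel i j) :
    IsSplitIdempotent (prevD i h.hom) ↔ IsSplitIdempotent (prevD j h.hom) := by
  have hdh : (M.d i j ≫ h.hom j i) ≫ (M.d i j ≫ h.hom j i) = M.d i j ≫ h.hom j i := by
    simp only [Category.assoc, reassoc_of% (h.d_comp_hom_comp_d i j)]
  have hhd : (h.hom j i ≫ M.d i j) ≫ (h.hom j i ≫ M.d i j) = h.hom j i ≫ M.d i j := by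
    simp only [Category.assoc, h.d_comp_hom_comp_d]
  rw [eq_sub_of_add_eq' (h.dNext_add_prevD i), IsSplitIdempotent.id_sub_iff hC,
    dNext_eq _ hij, prevD_eq _ hij]
  exact ⟨fun hs => hs.comp_swap hhd, fun hs => hs.comp_swap hdh⟩

end Homotopy

namespace CochainComplex

variable {C : Type u} [Category.{v} C] [Preadditive C] [HasBinaryBiproducts C]
  {M : CochainComplex C ℤ} (h : Homotopy (𝟙 M) 0) {Z : ℤ → C} (ι : ∀ i, Z i ⟶ M.X i)
  (π : ∀ i, M.X i ⟶ Z i) (hιπ : ∀ i, ι i ≫ π i = 𝟙 (Z i))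
  (hπι : ∀ i, π i ≫ ι i = prevD i h.hom)

lemma isSplitIdempotent_prevD_of_isZero (hC : WeaklyIdempotentComplete C) {k : ℤ}
    (hk : IsZero (M.X k)) (i : ℤ) : IsSplitIdempotent (prevD i h.hom) := by
  induction i using Int.inductionOn' (b := k) with
  | zero => exact .of_isZero hk _
  | succ i _ hi => exact (h.isSplitIdempotent_prevD_iff hC rfl).mp hi
  | pred i _ hi => exact (h.isSplitIdempotent_prevD_iff hC (sub_add_cancel i 1)).mpr hi

noncomputable def isoBiprodOfSplitPrevD (i : ℤ) : M.X i ≅ Z i ⊞ Z (i + 1) where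
  hom := biprod.lift (π i) (M.d i (i + 1) ≫ π (i + 1))
  inv := biprod.desc (ι i) (ι (i + 1) ≫ h.hom (i + 1) i)
  hom_inv_id := by
    rw [biprod.lift_desc, Category.assoc, reassoc_of% (hπι (i + 1)), hπι,
      reassoc_of% (h.d_comp_prevD rfl), ← dNext_eq _ rfl, add_comm, h.dNext_add_prevD]
  inv_hom_id := by
    have hι : ∀ j, ι j ≫ prevD j h.hom = ι j := fun j => by rw [← hπι, reassoc_of% hιπ]
    have hπ : ∀ j, prevD j h.hom ≫ π j = π j := fun j => by
      rw [← hπι, Category.assoc, hιπ, Category.comp_id]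
    have hhd : h.hom (i + 1) i ≫ M.d i (i + 1) = π (i + 1) ≫ ι (i + 1) := by
      rw [hπι, prevD_eq _ rfl]
    ext <;> simp only [Category.assoc, biprod.inl_desc_assoc, biprod.inr_desc_assoc,
      biprod.lift_fst, biprod.lift_snd, biprod.inl_fst, biprod.inl_snd, biprod.inr_fst,
      biprod.inr_snd, Category.id_comp]
    · exact hιπ i
    · rw [← hι i, Category.assoc, reassoc_of% (h.prevD_comp_d i (i + 1)), zero_comp, comp_zero]
    · calc ι (i + 1) ≫ h.hom (i + 1) i ≫ π i
          = ι (i + 1) ≫ h.hom (i + 1) i ≫ dNext i h.hom ≫ prevD i h.hom ≫ π i := by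
            rw [hπ, dNext_eq _ rfl]
            simp only [Category.assoc, reassoc_of% hhd, reassoc_of% hιπ]
        _ = 0 := by rw [reassoc_of% h.dNext_comp_prevD, zero_comp, comp_zero, comp_zero]
    · rw [reassoc_of% hhd, reassoc_of% hιπ, hιπ]

lemma exists_iso_splitComplex_of_isSplitIdempotent
    (hs : ∀ i, IsSplitIdempotent (prevD i h.hom)) :
    ∃ N : ℤ → C, Nonempty (M ≅ splitComplex C N) := by
  choose Z ι π hιπ hπι using hs
  refine ⟨Z, ⟨HomologicalComplex.Hom.isoOfComponents (isoBiprodOfSplitPrevD h ι π hιπ hπι) ?_⟩⟩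
  rintro i _ rfl
  simp only [splitComplex, CochainComplex.of_d]
  ext <;> simp only [isoBiprodOfSplitPrevD, Category.assoc, biprod.lift_snd_assoc,
    biprod.inl_fst, biprod.inl_snd, biprod.lift_fst, biprod.lift_snd, Category.comp_id, comp_zero,
    M.d_comp_d_assoc, zero_comp]

lemma exists_iso_splitComplex_of_isZero (hC : WeaklyIdempotentComplete C)
    (hM : Nonempty (Homotopy (𝟙 M) 0)) {k : ℤ} (hk : IsZero (M.X k)) :
    ∃ N : ℤ → C, Nonempty (M ≅ splitComplex C N) :=
  let ⟨h⟩ := hM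
  exists_iso_splitComplex_of_isSplitIdempotent h (isSplitIdempotent_prevD_of_isZero h hC hk)

end CochainComplex

theorem bounded_above_or_below_contractible_splits
    (hB : WeaklyIdempotentComplete B) :
    (∀ M : CochainComplex B ℤ, (∃ b : ℤ, ∀ i : ℤ, b < i → IsZero (M.X i)) →
      Nonempty (Homotopy (𝟙 M) 0) → ∃ N : ℤ → B, Nonempty (M ≅ splitComplex B N)) ∧
    (∀ M : CochainComplex B ℤ, (∃ a : ℤ, ∀ i : ℤ, i < a → IsZero (M.X i)) →
      Nonempty (Homotopy (𝟙 M) 0) → ∃ N : ℤ → B, Nonempty (M ≅ splitComplex B N)) :=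
  ⟨fun _ ⟨b, hb⟩ hM =>
      CochainComplex.exists_iso_splitComplex_of_isZero hB hM (hb _ (lt_add_one b)),
    fun _ ⟨a, ha⟩ hM =>
      CochainComplex.exists_iso_splitComplex_of_isZero hB hM (ha _ (sub_one_lt a))⟩
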